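/- arXiv:0906.4492 — 11 statements merged into one kernel-verified Lean document; each statement's English description precedes it below -/
import Mathlib

section
/- Let Γ be a set of linear arithmetic atoms over ℚ containing strict inequalities S = {0 < t₁, ..., 0 < tₙ}. Then Γ is satisfiable if and only if there exists a rational ε > 0 such that (Γ \ S) ∪ {ε ≤ t₁, ..., ε ≤ tₙ} is satisfiable. -/
theorem exists_gt_forall_le_of_forall_lt {ι α : Type*} [Finite ι] [LinearOrder α] [NoMaxOrder α]
    {a : α} {f : ι → α} (h : ∀ i, a < f i) : ∃ b, a < b ∧ ∀ i, b ≤ f i := by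
  cases isEmpty_or_nonempty ι with
  | inl _ =>
    obtain ⟨b, hab⟩ := exists_gt a
    exact ⟨b, hab, isEmptyElim⟩
  | inr _ =>
    obtain ⟨i₀, hi₀⟩ := Finite.exists_min f
    exact ⟨f i₀, h i₀, hi₀⟩

/-- Γ = G ∪ {0 < t₁,...,0 < tₙ} is satisfiable iff for some rational ε > 0,
G ∪ {ε ≤ t₁,...,ε ≤ tₙ} is satisfiable. -/
theorem stmt_3 {V : Type*} (G : (V → ℚ) → Prop) (n : ℕ) (t : Fin n → (V → ℚ) → ℚ) :
    (∃ μ, G μ ∧ ∀ i, 0 < t i μ) ↔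
    (∃ ε : ℚ, 0 < ε ∧ ∃ μ, G μ ∧ ∀ i, ε ≤ t i μ) := by
  constructor
  · rintro ⟨μ, hG, hpos⟩
    obtain ⟨ε, hε, hle⟩ := exists_gt_forall_le_of_forall_lt hpos
    exact ⟨ε, hε, μ, hG, hle⟩
  · rintro ⟨ε, hε, μ, hG, hle⟩
    exact ⟨μ, hG, fun i => hε.trans_le (hle i)⟩
end

section
/- Let A and B be conjunctions of linear arithmetic constraints over ℚ, with an atom n = (0 ≠ t) belonging to A. Define A⁺ = (A \ {n}) ∪ {0 < t} and A⁻ = (A \ {n}) ∪ {0 > t}. Suppose A⁺ ∧ B and A⁻ ∧ B are both unsatisfiable, and I⁺, I⁻ are interpolants for (A⁺, B) and (A⁻, B) respectively. Then I⁺ ∨ I⁻ is an interpolant for (A, B). -/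
theorem stmt_4_general {V : Type*} (A' B Ip Im : (V → ℚ) → Prop) (t : (V → ℚ) → ℚ)
    (common : Set V)
    (hdepp : ∀ μ ν : V → ℚ, (∀ v ∈ common, μ v = ν v) → (Ip μ ↔ Ip ν))
    (hdepm : ∀ μ ν : V → ℚ, (∀ v ∈ common, μ v = ν v) → (Im μ ↔ Im ν))
    (hAp : ∀ μ, A' μ ∧ 0 < t μ → Ip μ)
    (hBp : ∀ μ, ¬ (Ip μ ∧ B μ))
    (hAm : ∀ μ, A' μ ∧ 0 > t μ → Im μ)
    (hBm : ∀ μ, ¬ (Im μ ∧ B μ)) :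
    (∀ μ, A' μ ∧ (0 : ℚ) ≠ t μ → (Ip μ ∨ Im μ)) ∧
    (∀ μ, ¬ ((Ip μ ∨ Im μ) ∧ B μ)) ∧
    (∀ μ ν : V → ℚ, (∀ v ∈ common, μ v = ν v) → ((Ip μ ∨ Im μ) ↔ (Ip ν ∨ Im ν))) :=
  ⟨fun μ ⟨hA, hne⟩ => hne.lt_or_gt.imp (fun h => hAp μ ⟨hA, h⟩) (fun h => hAm μ ⟨hA, h⟩),
    fun μ ⟨hI, hB⟩ => hI.elim (fun h => hBp μ ⟨h, hB⟩) (fun h => hBm μ ⟨h, hB⟩),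
    fun μ ν hagree => or_congr (hdepp μ ν hagree) (hdepm μ ν hagree)⟩

/-- Interpolation for negated equalities, case n = (0 ≠ t) ∈ A:
A = A' ∧ (t ≠ 0), A⁺ = A' ∧ (0 < t), A⁻ = A' ∧ (0 > t).  If A⁺ ∧ B and A⁻ ∧ B are
unsatisfiable and I⁺, I⁻ are interpolants for (A⁺,B), (A⁻,B), then I⁺ ∨ I⁻ is an
interpolant for (A,B). -/
theorem stmt_4 {V : Type*} (A' B Ip Im : (V → ℚ) → Prop) (t : (V → ℚ) → ℚ)
    (common : Set V)
    (hdepp : ∀ μ ν : V → ℚ, (∀ v ∈ common, μ v = ν v) → (Ip μ ↔ Ip ν))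
    (hdepm : ∀ μ ν : V → ℚ, (∀ v ∈ common, μ v = ν v) → (Im μ ↔ Im ν))
    (hunsatp : ∀ μ, ¬ ((A' μ ∧ 0 < t μ) ∧ B μ))
    (hunsatm : ∀ μ, ¬ ((A' μ ∧ 0 > t μ) ∧ B μ))
    (hAp : ∀ μ, A' μ ∧ 0 < t μ → Ip μ)
    (hBp : ∀ μ, ¬ (Ip μ ∧ B μ))
    (hAm : ∀ μ, A' μ ∧ 0 > t μ → Im μ)
    (hBm : ∀ μ, ¬ (Im μ ∧ B μ)) :
    (∀ μ, A' μ ∧ (0 : ℚ) ≠ t μ → (Ip μ ∨ Im μ)) ∧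
    (∀ μ, ¬ ((Ip μ ∨ Im μ) ∧ B μ)) ∧
    (∀ μ ν : V → ℚ, (∀ v ∈ common, μ v = ν v) → ((Ip μ ∨ Im μ) ↔ (Ip ν ∨ Im ν))) :=
  stmt_4_general A' B Ip Im t common hdepp hdepm hAp hBp hAm hBm
end

section
/- Let A and B be conjunctions of linear arithmetic constraints over ℚ, with an atom n = (0 ≠ t) belonging to B. Define B⁺ = (B \ {n}) ∪ {0 < t} and B⁻ = (B \ {n}) ∪ {0 > t}. Suppose A ∧ B⁺ and A ∧ B⁻ are both unsatisfiable, and I⁺, I⁻ are interpolants for (A, B⁺) and (A, B⁻) respectively. Then I⁺ ∧ I⁻ is an interpolant for (A, B). -/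
theorem stmt_5_general {V : Type*} (A B' Ip Im : (V → ℚ) → Prop) (t : (V → ℚ) → ℚ)
    (common : Set V)
    (hdepp : ∀ μ ν : V → ℚ, (∀ v ∈ common, μ v = ν v) → (Ip μ ↔ Ip ν))
    (hdepm : ∀ μ ν : V → ℚ, (∀ v ∈ common, μ v = ν v) → (Im μ ↔ Im ν))
    (hAp : ∀ μ, A μ → Ip μ)
    (hBp : ∀ μ, ¬ (Ip μ ∧ (B' μ ∧ 0 < t μ)))
    (hAm : ∀ μ, A μ → Im μ)
    (hBm : ∀ μ, ¬ (Im μ ∧ (B' μ ∧ 0 > t μ))) :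
    (∀ μ, A μ → (Ip μ ∧ Im μ)) ∧
    (∀ μ, ¬ ((Ip μ ∧ Im μ) ∧ (B' μ ∧ (0 : ℚ) ≠ t μ))) ∧
    (∀ μ ν : V → ℚ, (∀ v ∈ common, μ v = ν v) → ((Ip μ ∧ Im μ) ↔ (Ip ν ∧ Im ν))) := by
  refine ⟨fun μ hA => ⟨hAp μ hA, hAm μ hA⟩, ?_,
    fun μ ν hagree => and_congr (hdepp μ ν hagree) (hdepm μ ν hagree)⟩
  rintro μ ⟨⟨hp, hm⟩, hB', hne⟩
  rcases hne.lt_or_gt with hpos | hneg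
  · exact hBp μ ⟨hp, hB', hpos⟩
  · exact hBm μ ⟨hm, hB', hneg⟩

/-- Interpolation for negated equalities, case n = (0 ≠ t) ∈ B:
B = B' ∧ (t ≠ 0), B⁺ = B' ∧ (0 < t), B⁻ = B' ∧ (0 > t).  If A ∧ B⁺ and A ∧ B⁻ are
unsatisfiable and I⁺, I⁻ are interpolants for (A,B⁺), (A,B⁻), then I⁺ ∧ I⁻ is an
interpolant for (A,B). -/
theorem stmt_5 {V : Type*} (A B' Ip Im : (V → ℚ) → Prop) (t : (V → ℚ) → ℚ)
    (common : Set V)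
    (hdepp : ∀ μ ν : V → ℚ, (∀ v ∈ common, μ v = ν v) → (Ip μ ↔ Ip ν))
    (hdepm : ∀ μ ν : V → ℚ, (∀ v ∈ common, μ v = ν v) → (Im μ ↔ Im ν))
    (hunsatp : ∀ μ, ¬ (A μ ∧ (B' μ ∧ 0 < t μ)))
    (hunsatm : ∀ μ, ¬ (A μ ∧ (B' μ ∧ 0 > t μ)))
    (hAp : ∀ μ, A μ → Ip μ)
    (hBp : ∀ μ, ¬ (Ip μ ∧ (B' μ ∧ 0 < t μ)))
    (hAm : ∀ μ, A μ → Im μ)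
    (hBm : ∀ μ, ¬ (Im μ ∧ (B' μ ∧ 0 > t μ))) :
    (∀ μ, A μ → (Ip μ ∧ Im μ)) ∧
    (∀ μ, ¬ ((Ip μ ∧ Im μ) ∧ (B' μ ∧ (0 : ℚ) ≠ t μ))) ∧
    (∀ μ ν : V → ℚ, (∀ v ∈ common, μ v = ν v) → ((Ip μ ∧ Im μ) ↔ (Ip ν ∧ Im ν))) :=
  stmt_5_general A B' Ip Im t common hdepp hdepm hAp hBp hAm hBm
end

section
/- In difference logic, a finite set S of constraints of the form 0 ≤ y - x + c (with x, y variables and c ∈ ℤ) is unsatisfiable over ℚ if and only if the weighted directed graph with an edge x →ᶜ y of weight c for each constraint (0 ≤ y - x + c) ∈ S contains a cycle of strictly negative total weight. -/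
/-!
Along a cycle the potential differences `μ y - μ x` of a satisfying assignment telescope to `0`,
so the constraints force the cycle's weight to be nonnegative.

Conversely, if no cycle is negative, cutting a closed walk out of a walk never increases its
weight, so every walk weighs at least as much as one without repeated edges, and the weights of
walks leaving `v` are bounded below. Their least value `μ v` then satisfies `μ x ≤ μ y + c` for
every edge `x →ᶜ y`, since the edge can be prepended to any walk leaving `y`.
-/

theorem List.exists_eq_append_cons_append_cons_of_not_nodup {α : Type*} {l : List α}
    (h : ¬ l.Nodup) : ∃ a s t u, l = s ++ a :: t ++ a :: u := by
  induction l with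
  | nil => exact absurd List.nodup_nil h
  | cons b l ih =>
    rw [List.nodup_cons, not_and_or, not_not] at h
    rcases h with hb | hl
    · obtain ⟨t, u, rfl⟩ := List.append_of_mem hb
      exact ⟨b, [], t, u, rfl⟩
    · obtain ⟨a, s, t, u, rfl⟩ := ih hl
      exact ⟨a, b :: s, t, u, rfl⟩

namespace DifferenceLogic

variable {V : Type*}

def IsWalk (S : Finset (V × V × ℤ)) (l : List (V × V × ℤ)) : Prop :=
  (∀ e ∈ l, e ∈ S) ∧ l.IsChain fun e f => e.2.1 = f.1

def weight (l : List (V × V × ℤ)) : ℤ := (l.map fun e => e.2.2).sum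

@[simp] lemma weight_cons (e : V × V × ℤ) (l : List (V × V × ℤ)) :
    weight (e :: l) = e.2.2 + weight l := by
  simp [weight]

@[simp] lemma weight_append (l r : List (V × V × ℤ)) :
    weight (l ++ r) = weight l + weight r := by
  simp [weight]

/-- The closed walk `a :: t` is encoded as the walk `a :: t ++ [a]`: the trailing copy of `a`
records that the last edge returns to the start of `a`. -/
def ClosedWalksNonneg (S : Finset (V × V × ℤ)) : Prop :=
  ∀ a t, IsWalk S (a :: t ++ [a]) → 0 ≤ weight (a :: t)

def walkWeights (S : Finset (V × V × ℤ)) (v : V) : Set ℤ :=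
  {w | ∃ l, IsWalk S l ∧ (∀ e ∈ l.head?, e.1 = v) ∧ weight l = w}

/-- Meaningful only when `walkWeights S v` is bounded below; otherwise `sInf` is a junk value. -/
noncomputable def potential (S : Finset (V × V × ℤ)) (v : V) : ℤ := sInf (walkWeights S v)

variable {S : Finset (V × V × ℤ)}

lemma IsWalk.nil : IsWalk S [] := ⟨by simp, .nil⟩

lemma IsWalk.cons {e : V × V × ℤ} {l : List (V × V × ℤ)} (he : e ∈ S) (hl : IsWalk S l)
    (hel : ∀ f ∈ l.head?, e.2.1 = f.1) : IsWalk S (e :: l) :=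
  ⟨by simpa [he] using hl.1, hl.2.cons hel⟩

lemma IsWalk.split {s t u : List (V × V × ℤ)} {a : V × V × ℤ}
    (h : IsWalk S (s ++ a :: t ++ a :: u)) :
    IsWalk S (a :: t ++ [a]) ∧ IsWalk S (s ++ a :: u) := by
  obtain ⟨hS, hc⟩ := h
  refine ⟨⟨fun e he => hS e (by simp at he ⊢; tauto), hc.infix ⟨s, u, by simp⟩⟩,
    ⟨fun e he => hS e (by simp at he ⊢; tauto), ?_⟩⟩
  rw [List.append_assoc, List.isChain_append] at hc
  obtain ⟨hs, hatu, hlink⟩ := hc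
  exact List.isChain_append.2 ⟨hs, hatu.suffix ⟨a :: t, by simp⟩, by simpa using hlink⟩

lemma zero_mem_walkWeights (v : V) : (0 : ℤ) ∈ walkWeights S v := ⟨[], .nil, by simp, rfl⟩

lemma exists_nodup_walk_weight_le (hS : ClosedWalksNonneg S) {l : List (V × V × ℤ)}
    (hl : IsWalk S l) :
    ∃ l', IsWalk S l' ∧ l'.Nodup ∧ l'.head? = l.head? ∧ weight l' ≤ weight l := by
  induction hn : l.length using Nat.strong_induction_on generalizing l with
  | _ n ih =>
  by_cases hnd : l.Nodup
  · exact ⟨l, hl, hnd, rfl, le_rfl⟩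
  obtain ⟨a, s, t, u, rfl⟩ := List.exists_eq_append_cons_append_cons_of_not_nodup hnd
  obtain ⟨hclosed, hshort⟩ := hl.split
  obtain ⟨l', hw, hnd', hhead, hle⟩ := ih _ (by simp [← hn]) hshort rfl
  refine ⟨l', hw, hnd', by rw [hhead]; cases s <;> rfl, ?_⟩
  have := hS a t hclosed
  simp only [weight_append, weight_cons] at hle this ⊢
  omega

lemma neg_sum_abs_le_weight (hS : ClosedWalksNonneg S) {l : List (V × V × ℤ)}
    (hl : IsWalk S l) : -∑ e ∈ S, |e.2.2| ≤ weight l := by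
  classical
  obtain ⟨l', hw, hnd, -, hle⟩ := exists_nodup_walk_weight_le hS hl
  have hsub : l'.toFinset ⊆ S := fun e he => hw.1 e (List.mem_toFinset.1 he)
  calc -∑ e ∈ S, |e.2.2| ≤ -∑ e ∈ l'.toFinset, |e.2.2| :=
        neg_le_neg (Finset.sum_le_sum_of_subset_of_nonneg hsub fun _ _ _ => abs_nonneg _)
    _ ≤ ∑ e ∈ l'.toFinset, e.2.2 := neg_le_of_abs_le (Finset.abs_sum_le_sum_abs _ _)
    _ = weight l' := List.sum_toFinset _ hnd
    _ ≤ weight l := hle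

lemma bddBelow_walkWeights (hS : ClosedWalksNonneg S) (v : V) : BddBelow (walkWeights S v) :=
  ⟨_, fun _ ⟨_, hl, _, hw⟩ => hw ▸ neg_sum_abs_le_weight hS hl⟩

lemma potential_le_potential_add (hS : ClosedWalksNonneg S) {e : V × V × ℤ} (he : e ∈ S) :
    potential S e.1 ≤ potential S e.2.1 + e.2.2 := by
  suffices potential S e.1 - e.2.2 ≤ potential S e.2.1 by omega
  refine le_csInf ⟨0, zero_mem_walkWeights _⟩ fun _ ⟨l, hl, hstart, hw⟩ => ?_
  have := csInf_le (bddBelow_walkWeights hS e.1)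
    ⟨e :: l, hl.cons he fun f hf => (hstart f hf).symm, by simp, rfl⟩
  rw [weight_cons, hw] at this
  exact sub_le_iff_le_add'.2 this

lemma closedWalksNonneg_of_forall_cycle
    (h : ∀ n (e : Fin (n + 1) → V × V × ℤ), (∀ i, e i ∈ S) →
      (∀ i, (e i).2.1 = (e (i + 1)).1) → 0 ≤ ∑ i, (e i).2.2) :
    ClosedWalksNonneg S := by
  intro a t hw
  have hlink := (show ((a :: t) ++ [a]).IsChain fun e f => e.2.1 = f.1 from hw.2).getElem
  rw [weight, ← Fin.sum_univ_fun_getElem]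
  exact h t.length (fun i => (a :: t)[i.1])
    (fun i => hw.1 _ (List.mem_append_left _ (List.getElem_mem _))) fun i => by
      induction i using Fin.lastCases with
      | last =>
        have := hlink t.length (by simp)
        rw [List.getElem_append_left (by simp), List.getElem_append_right (by simp)] at this
        simpa using this
      | cast j =>
        have := hlink j (by simp)
        rw [List.getElem_append_left (by simp), List.getElem_append_left (by simp)] at this
        simpa [Fin.coeSucc_eq_succ] using this

lemma sum_sub_eq_zero_of_cyclic {G : Type*} [AddCommGroup G] (μ : V → G) {n : ℕ}
    {e : Fin (n + 1) → V × V × ℤ} (hlink : ∀ i, (e i).2.1 = (e (i + 1)).1) :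
    ∑ i, (μ (e i).2.1 - μ (e i).1) = 0 := by
  rw [Finset.sum_sub_distrib, sub_eq_zero]
  simp_rw [hlink]
  exact Fintype.sum_equiv (Equiv.addRight 1) _ _ fun _ => rfl

lemma cycle_weight_nonneg_of_satisfies {K : Type*} [Ring K] [LinearOrder K]
    [IsStrictOrderedRing K] (μ : V → K) (hμ : ∀ e ∈ S, 0 ≤ μ e.2.1 - μ e.1 + (e.2.2 : K))
    {n : ℕ} {e : Fin (n + 1) → V × V × ℤ} (hS : ∀ i, e i ∈ S)
    (hlink : ∀ i, (e i).2.1 = (e (i + 1)).1) :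
    0 ≤ ∑ i, (e i).2.2 := by
  have : (0 : K) ≤ ∑ i, (μ (e i).2.1 - μ (e i).1 + ((e i).2.2 : K)) :=
    Finset.sum_nonneg fun i _ => hμ _ (hS i)
  rw [Finset.sum_add_distrib, sum_sub_eq_zero_of_cyclic μ hlink, zero_add] at this
  exact_mod_cast this

end DifferenceLogic

/-- A finite set S of difference constraints 0 ≤ y - x + c (edge x →ᶜ y) is
unsatisfiable over ℚ iff the induced weighted graph has a negative-weight cycle. -/
theorem stmt_6 {V : Type*} (S : Finset (V × V × ℤ)) :
    (¬ ∃ μ : V → ℚ, ∀ e ∈ S, 0 ≤ μ e.2.1 - μ e.1 + (e.2.2 : ℚ)) ↔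
    (∃ n : ℕ, ∃ e : Fin (n + 1) → V × V × ℤ,
      (∀ i, e i ∈ S) ∧
      (∀ i : Fin (n + 1), (e i).2.1 = (e (i + 1)).1) ∧
      (∑ i, (e i).2.2) < 0) := by
  constructor
  · intro hunsat
    by_contra hcycles
    push Not at hcycles
    have hclosed := DifferenceLogic.closedWalksNonneg_of_forall_cycle hcycles
    refine hunsat ⟨fun v => DifferenceLogic.potential S v, fun e he => ?_⟩
    have := (Int.cast_le (R := ℚ)).2 (DifferenceLogic.potential_le_potential_add hclosed he)
    push_cast at this
    linarith
  · rintro ⟨n, e, hS, hlink, hneg⟩ ⟨μ, hμ⟩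
    exact hneg.not_ge (DifferenceLogic.cycle_weight_nonneg_of_satisfies μ hμ hS hlink)
end

section
/- A finite set of difference-logic constraints 0 ≤ y - x + c with integer constants c is satisfiable over ℚ if and only if it is satisfiable over ℤ. -/
theorem Int.floor_sub_floor_add_nonneg {R : Type*} [Ring R] [LinearOrder R] [FloorRing R]
    [IsOrderedRing R] {x y : R} {c : ℤ} (h : 0 ≤ y - x + c) : 0 ≤ ⌊y⌋ - ⌊x⌋ + c := by
  have hle : ⌊x⌋ ≤ ⌊y + c⌋ := Int.floor_le_floor (sub_nonneg.mp (by rwa [add_sub_right_comm]))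
  rw [Int.floor_add_intCast] at hle
  linarith

/-- A finite set of difference constraints 0 ≤ y - x + c with integer constants is
satisfiable over ℚ iff it is satisfiable over ℤ. -/
theorem stmt_7 {V : Type*} (S : Finset (V × V × ℤ)) :
    (∃ μ : V → ℚ, ∀ e ∈ S, 0 ≤ μ e.2.1 - μ e.1 + (e.2.2 : ℚ)) ↔
    (∃ μ : V → ℤ, ∀ e ∈ S, 0 ≤ μ e.2.1 - μ e.1 + e.2.2) := by
  constructor
  · rintro ⟨μ, hμ⟩
    exact ⟨fun v => ⌊μ v⌋, fun e he => Int.floor_sub_floor_add_nonneg (hμ e he)⟩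
  · rintro ⟨μ, hμ⟩
    exact ⟨fun v => μ v, fun e he => by simpa using Int.cast_nonneg (R := ℚ) (hμ e he)⟩
end

section
/- Let A ∪ B be a set of difference-logic constraints whose constraint graph contains a negative-weight cycle C, with C ⊄ A and C ⊄ B. Then the conjunction of the summary constraints of the maximal A-paths of C is an interpolant for (A, B): it is entailed by A, it is jointly unsatisfiable with B, and it mentions only variables occurring in both A and B. -/
/-!
Each summary constraint is the sum of the constraints along its A-path, whose potential
differences telescope, so A entails it. Every edge of the cycle C is either a B-edge or
lies on a maximal A-path, so the summaries together with B sum, again telescopically, to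
`0 ≤ weight C < 0`. An A-path endpoint is incident to an A-edge of its path and, by
maximality, to the B-edge just before or just after it.
-/

/-- `x` occurs in the set of difference constraints `S` (edges x →ᶜ y, meaning
0 ≤ y - x + c). -/
def occursIn {V : Type*} (x : V) (S : Finset (V × V × ℤ)) : Prop :=
  ∃ e ∈ S, e.1 = x ∨ e.2.1 = x

open Finset

theorem Fin.sum_succ_sub_castSucc {G : Type*} [AddCommGroup G] {n : ℕ} (f : Fin (n + 1) → G) :
    ∑ i : Fin n, (f i.succ - f i.castSucc) = f (Fin.last n) - f 0 := by
  induction n with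
  | zero => simp
  | succ n ih =>
    rw [Fin.sum_univ_castSucc]
    simp only [Fin.succ_castSucc, ih fun i => f i.castSucc, Fin.succ_last,
      Fin.castSucc_zero]
    abel

theorem Fin.sum_add_one_sub {G : Type*} [AddCommGroup G] {m : ℕ} (f : Fin (m + 1) → G) :
    ∑ j, (f (j + 1) - f j) = 0 := by
  rw [sum_sub_distrib, sub_eq_zero]
  exact Fintype.sum_equiv (Equiv.addRight 1) _ _ fun _ => rfl

section DifferenceConstraints

variable {V : Type*}

theorem occursIn_of_mem_left {S : Finset (V × V × ℤ)} {x y : V} {c : ℤ}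
    (h : (x, y, c) ∈ S) : occursIn x S :=
  ⟨_, h, Or.inl rfl⟩

theorem occursIn_of_mem_right {S : Finset (V × V × ℤ)} {x y : V} {c : ℤ}
    (h : (x, y, c) ∈ S) : occursIn y S :=
  ⟨_, h, Or.inr rfl⟩

theorem occursIn_path_endpoints {S : Finset (V × V × ℤ)} {n : ℕ} (hn : 0 < n)
    (q : Fin (n + 1) → V) (d : Fin n → ℤ) (hedge : ∀ i, (q i.castSucc, q i.succ, d i) ∈ S) :
    occursIn (q 0) S ∧ occursIn (q (Fin.last n)) S := by
  obtain ⟨k, rfl⟩ : ∃ k, n = k + 1 := ⟨n - 1, by omega⟩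
  exact ⟨by simpa using occursIn_of_mem_left (hedge 0),
    by simpa using occursIn_of_mem_right (hedge (Fin.last k))⟩

theorem path_summary_nonneg (μ : V → ℚ) {n : ℕ} (q : Fin (n + 1) → V) (d : Fin n → ℤ)
    (hedge : ∀ i, 0 ≤ μ (q i.succ) - μ (q i.castSucc) + d i) :
    0 ≤ μ (q (Fin.last n)) - μ (q 0) + ∑ i, (d i : ℚ) := by
  calc (0 : ℚ) ≤ ∑ i, (μ (q i.succ) - μ (q i.castSucc) + d i) :=
        sum_nonneg fun i _ => hedge i
    _ = μ (q (Fin.last n)) - μ (q 0) + ∑ i, (d i : ℚ) := by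
        rw [sum_add_distrib, Fin.sum_succ_sub_castSucc fun i => μ (q i)]

theorem cycle_weight_nonneg (μ : V → ℚ) {m : ℕ} (v : Fin (m + 1) → V) (w : Fin (m + 1) → ℤ)
    (hedge : ∀ j, 0 ≤ μ (v (j + 1)) - μ (v j) + w j) :
    0 ≤ ∑ j, w j := by
  have h : (0 : ℚ) ≤ ∑ j, (μ (v (j + 1)) - μ (v j) + w j) := sum_nonneg fun j _ => hedge j
  rw [sum_add_distrib, Fin.sum_add_one_sub fun j => μ (v j), zero_add] at h
  exact_mod_cast h

end DifferenceConstraints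

theorem stmt_9_general {V : Type*} (A B : Finset (V × V × ℤ)) (m : ℕ)
    (v : Fin (m + 1) → V) (isB : Fin (m + 1) → Bool)
    (L : Fin (m + 1) → ℕ)
    (q : ∀ j : Fin (m + 1), Fin (L j + 1) → V)
    (d : ∀ j : Fin (m + 1), Fin (L j) → ℤ)
    (w : Fin (m + 1) → ℤ)
    (hBedge : ∀ j, isB j = true → (v j, v (j + 1), w j) ∈ B)
    (hL : ∀ j, isB j = false → 0 < L j)
    (hq0 : ∀ j, isB j = false → q j 0 = v j)
    (hqlast : ∀ j, isB j = false → q j (Fin.last (L j)) = v (j + 1))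
    (hAedge : ∀ j, isB j = false → ∀ i : Fin (L j),
      (q j i.castSucc, q j i.succ, d j i) ∈ A)
    (hw : ∀ j, isB j = false → w j = ∑ i, d j i)
    (hneg : ∑ j, w j < 0)
    (hmax : ∀ j, isB j = false → isB (j + 1) = true) :
    (∀ μ : V → ℚ, (∀ e ∈ A, 0 ≤ μ e.2.1 - μ e.1 + (e.2.2 : ℚ)) →
        ∀ j, isB j = false → 0 ≤ μ (v (j + 1)) - μ (v j) + (w j : ℚ)) ∧
    (∀ μ : V → ℚ,
        ¬ ((∀ j, isB j = false → 0 ≤ μ (v (j + 1)) - μ (v j) + (w j : ℚ)) ∧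
           (∀ e ∈ B, 0 ≤ μ e.2.1 - μ e.1 + (e.2.2 : ℚ)))) ∧
    (∀ j, isB j = false →
        occursIn (v j) A ∧ occursIn (v j) B ∧
        occursIn (v (j + 1)) A ∧ occursIn (v (j + 1)) B) := by
  refine ⟨fun μ hA j hj => ?_, fun μ ⟨hsummary, hB⟩ => ?_, fun j hj => ?_⟩
  · have := path_summary_nonneg μ (q j) (d j) fun i => hA _ (hAedge j hj i)
    rwa [hq0 j hj, hqlast j hj, ← Int.cast_sum, ← hw j hj] at this
  · have hcycle : ∀ j, 0 ≤ μ (v (j + 1)) - μ (v j) + w j := fun j => by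
      cases hj : isB j
      · exact hsummary j hj
      · exact hB _ (hBedge j hj)
    exact (cycle_weight_nonneg μ v w hcycle).not_gt hneg
  · have hprev : isB (j - 1) = true := by
      by_contra! h
      simpa [hj] using hmax (j - 1) (by simpa using h)
    obtain ⟨hfirst, hlast⟩ := occursIn_path_endpoints (hL j hj) (q j) (d j) (hAedge j hj)
    rw [hq0 j hj] at hfirst
    rw [hqlast j hj] at hlast
    refine ⟨hfirst, ?_, hlast, occursIn_of_mem_left (hBedge (j + 1) (hmax j hj))⟩
    simpa using occursIn_of_mem_right (hBedge (j - 1) hprev)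

/-- Graph-based interpolation for difference logic.  A ∪ B has a negative cycle C,
given as m+1 consecutive segments (boundaries v j): each segment is either a single
B-edge, or a (nonempty, maximal: followed by a B-segment) A-path q j with weights
d j and summary weight w j.  The cycle is not contained in A nor in B.  Then the
conjunction of the summary constraints 0 ≤ v(j+1) - v(j) + w j of the A-paths is an
interpolant for (A,B): entailed by A, jointly unsatisfiable with B, and its
variables (the A-path endpoints) occur both in A and in B. -/
theorem stmt_9 {V : Type*} (A B : Finset (V × V × ℤ)) (m : ℕ)
    (v : Fin (m + 1) → V) (isB : Fin (m + 1) → Bool)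
    (L : Fin (m + 1) → ℕ)
    (q : ∀ j : Fin (m + 1), Fin (L j + 1) → V)
    (d : ∀ j : Fin (m + 1), Fin (L j) → ℤ)
    (w : Fin (m + 1) → ℤ)
    (hBedge : ∀ j, isB j = true → (v j, v (j + 1), w j) ∈ B)
    (hL : ∀ j, isB j = false → 0 < L j)
    (hq0 : ∀ j, isB j = false → q j 0 = v j)
    (hqlast : ∀ j, isB j = false → q j (Fin.last (L j)) = v (j + 1))
    (hAedge : ∀ j, isB j = false → ∀ i : Fin (L j),
      (q j i.castSucc, q j i.succ, d j i) ∈ A)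
    (hw : ∀ j, isB j = false → w j = ∑ i, d j i)
    (hneg : ∑ j, w j < 0)
    (hmax : ∀ j, isB j = false → isB (j + 1) = true)
    (hnotinA : ∃ j, isB j = true)
    (hnotinB : ∃ j, isB j = false) :
    (∀ μ : V → ℚ, (∀ e ∈ A, 0 ≤ μ e.2.1 - μ e.1 + (e.2.2 : ℚ)) →
        ∀ j, isB j = false → 0 ≤ μ (v (j + 1)) - μ (v j) + (w j : ℚ)) ∧
    (∀ μ : V → ℚ,
        ¬ ((∀ j, isB j = false → 0 ≤ μ (v (j + 1)) - μ (v j) + (w j : ℚ)) ∧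
           (∀ e ∈ B, 0 ≤ μ e.2.1 - μ e.1 + (e.2.2 : ℚ)))) ∧
    (∀ j, isB j = false →
        occursIn (v j) A ∧ occursIn (v j) B ∧
        occursIn (v (j + 1)) A ∧ occursIn (v (j + 1)) B) :=
  stmt_9_general A B m v isB L q d w hBedge hL hq0 hqlast hAedge hw hneg hmax
end

section
/- Over the integers, if a set of UTVPI constraints entails (via a path in the encoded difference graph) both 0 ≤ x + t + m and 0 ≤ x - t + n for a variable x and a term t, then it entails 0 ≤ x + ⌊(m+n)/2⌋ (tightening). In particular, if a path from x⁻ to x⁺ in the encoded graph has odd weight 2k+1, then the corresponding UTVPI constraints entail 0 ≤ x + k over ℤ. -/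
theorem Int.add_ediv_two_nonneg {a c : ℤ} (h : 0 ≤ 2 * a + c) : 0 ≤ a + c / 2 := by
  omega

theorem Int.add_nonneg_of_two_mul_add_odd_nonneg {a k : ℤ} (h : 0 ≤ 2 * a + (2 * k + 1)) :
    0 ≤ a + k := by
  simpa [show (2 * k + 1) / 2 = k by omega] using Int.add_ediv_two_nonneg h

/-- Integer tightening: if φ entails 0 ≤ x + t + m and 0 ≤ x - t + n over ℤ, it
entails 0 ≤ x + ⌊(m+n)/2⌋.  In particular, if a set ψ entails 0 ≤ 2x + (2k+1)
(an odd-weight path from x⁻ to x⁺ in the encoded graph), it entails 0 ≤ x + k. -/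
theorem stmt_11 {V : Type*} (φ : (V → ℤ) → Prop) (x : V) (t : (V → ℤ) → ℤ) (m n : ℤ)
    (h1 : ∀ μ, φ μ → 0 ≤ μ x + t μ + m)
    (h2 : ∀ μ, φ μ → 0 ≤ μ x - t μ + n) :
    (∀ μ, φ μ → 0 ≤ μ x + (m + n) / 2) ∧
    (∀ (ψ : (V → ℤ) → Prop) (k : ℤ),
      (∀ μ, ψ μ → 0 ≤ 2 * μ x + (2 * k + 1)) → ∀ μ, ψ μ → 0 ≤ μ x + k) :=
  ⟨fun μ hμ => Int.add_ediv_two_nonneg (by linarith [h1 μ hμ, h2 μ hμ]),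
    fun _ _ h μ hμ => Int.add_nonneg_of_two_mul_add_odd_nonneg (h μ hμ)⟩
end

section
/- Let φ be a conjunction of UTVPI constraints over ℤ that is satisfiable over ℚ. Then φ is unsatisfiable over ℤ if and only if the encoded difference-constraint graph G(φ) contains a cycle C of total weight 0 passing through two vertices x⁺ᵢ and x⁻ᵢ such that the weight of the path from x⁻ᵢ to x⁺ᵢ along C is odd. -/
/-- Satisfaction over ℤ of UTVPI constraints given in five families:
P: 0 ≤ x₂ - x₁ + k; S: 0 ≤ x₁ + x₂ + k; N: 0 ≤ -x₁ - x₂ + k; U: 0 ≤ x₁ + k;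
Lo: 0 ≤ -x₁ + k. -/
def UTVPISatZ {V : Type*} (P S N : Finset (V × V × ℤ)) (U Lo : Finset (V × ℤ))
    (μ : V → ℤ) : Prop :=
  (∀ p ∈ P, 0 ≤ μ p.2.1 - μ p.1 + p.2.2) ∧
  (∀ p ∈ S, 0 ≤ μ p.1 + μ p.2.1 + p.2.2) ∧
  (∀ p ∈ N, 0 ≤ -μ p.1 - μ p.2.1 + p.2.2) ∧
  (∀ p ∈ U, 0 ≤ μ p.1 + p.2) ∧
  (∀ p ∈ Lo, 0 ≤ -μ p.1 + p.2)

/-- Satisfaction over ℚ of the same UTVPI constraints. -/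
def UTVPISatQ {V : Type*} (P S N : Finset (V × V × ℤ)) (U Lo : Finset (V × ℤ))
    (μ : V → ℚ) : Prop :=
  (∀ p ∈ P, 0 ≤ μ p.2.1 - μ p.1 + (p.2.2 : ℚ)) ∧
  (∀ p ∈ S, 0 ≤ μ p.1 + μ p.2.1 + (p.2.2 : ℚ)) ∧
  (∀ p ∈ N, 0 ≤ -μ p.1 - μ p.2.1 + (p.2.2 : ℚ)) ∧
  (∀ p ∈ U, 0 ≤ μ p.1 + (p.2 : ℚ)) ∧
  (∀ p ∈ Lo, 0 ≤ -μ p.1 + (p.2 : ℚ))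

/-- The edges of Miné's encoded difference graph, over signed vertices
x⁺ = Sum.inl x and x⁻ = Sum.inr x. -/
def UTVPIEdge {V : Type*} (P S N : Finset (V × V × ℤ)) (U Lo : Finset (V × ℤ)) :
    (V ⊕ V) → (V ⊕ V) → ℤ → Prop := fun u v c =>
  (∃ p ∈ P, u = Sum.inl p.1 ∧ v = Sum.inl p.2.1 ∧ c = p.2.2) ∨
  (∃ p ∈ P, u = Sum.inr p.2.1 ∧ v = Sum.inr p.1 ∧ c = p.2.2) ∨
  (∃ p ∈ S, u = Sum.inr p.1 ∧ v = Sum.inl p.2.1 ∧ c = p.2.2) ∨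
  (∃ p ∈ S, u = Sum.inr p.2.1 ∧ v = Sum.inl p.1 ∧ c = p.2.2) ∨
  (∃ p ∈ N, u = Sum.inl p.1 ∧ v = Sum.inr p.2.1 ∧ c = p.2.2) ∨
  (∃ p ∈ N, u = Sum.inl p.2.1 ∧ v = Sum.inr p.1 ∧ c = p.2.2) ∨
  (∃ p ∈ U, u = Sum.inr p.1 ∧ v = Sum.inl p.1 ∧ c = 2 * p.2) ∨
  (∃ p ∈ Lo, u = Sum.inl p.1 ∧ v = Sum.inr p.1 ∧ c = 2 * p.2)

/-- A path in the encoded graph: n edges with vertex sequence q and weights w. -/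
def IsEPath {V : Type*} (E : (V ⊕ V) → (V ⊕ V) → ℤ → Prop) (n : ℕ)
    (q : Fin (n + 1) → V ⊕ V) (w : Fin n → ℤ) : Prop :=
  ∀ i : Fin n, E (q i.castSucc) (q i.succ) (w i)

/-!
A rational solution `μ` makes `f := ⌈signed μ⌉` an integral potential of `G(φ)` with `x⁺` and
`x⁻` independent, and then `d x := f x⁺ - f x⁻` is a potential for the doubled weights: `d / 2`
is a half-integral solution. Rounding `d x / 2` for odd `d x` is a 2-SAT problem whose
implications are the edges tight for `d`, and a tight path from `u` to `v` has weight
`(d u - d v) / 2`. So the 2-SAT problem fails only if some `x` with `d x` odd has tight paths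
`x⁻ → x⁺ → x⁻`, which form a zero-weight cycle whose `x⁻ → x⁺` part has weight `-d x`.
Conversely, an integral solution `ν` telescopes along paths: paths `x⁻ → x⁺` weigh at least
`-2 ν x` and paths `x⁺ → x⁻` at least `2 ν x`, so a zero-weight cycle splits into two even halves.
-/

open Function Relation

namespace UTVPI

section Selection

variable {α : Type*} {σ : α → α} {R : α → α → Prop} {O T : Set α}

def IsCoherent (R : α → α → Prop) (σ : α → α) (O T : Set α) : Prop :=
  (∀ ⦃a b⦄, R a b → a ∈ T → b ∈ T) ∧ ∀ a ∈ O, ¬(a ∈ T ∧ σ a ∈ T)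

lemma reflTransGen_mirror (hR : ∀ ⦃a b⦄, R a b → R (σ b) (σ a)) {a b : α}
    (h : ReflTransGen R a b) : ReflTransGen R (σ b) (σ a) := by
  induction h with
  | refl => rfl
  | tail _ hbc ih => exact ih.head (hR hbc)

lemma IsCoherent.mem_of_reflTransGen (hT : IsCoherent R σ O T) {a b : α}
    (h : ReflTransGen R a b) (ha : a ∈ T) : b ∈ T := by
  induction h with
  | refl => exact ha
  | tail _ hbc ih => exact hT.1 hbc ih

lemma isCoherent_sUnion {c : Set (Set α)} (hc : ∀ T ∈ c, IsCoherent R σ O T)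
    (hchain : IsChain (· ⊆ ·) c) : IsCoherent R σ O (⋃₀ c) := by
  refine ⟨?_, ?_⟩
  · rintro a b hab ⟨T, hT, ha⟩
    exact ⟨T, hT, (hc T hT).1 hab ha⟩
  · rintro a ha ⟨⟨T₁, hT₁, ha₁⟩, ⟨T₂, hT₂, ha₂⟩⟩
    rcases hchain.total hT₁ hT₂ with h | h
    · exact (hc T₂ hT₂).2 a ha ⟨h ha₁, ha₂⟩
    · exact (hc T₁ hT₁).2 a ha ⟨ha₁, h ha₂⟩

lemma IsCoherent.union_reachable (hσ : Involutive σ) (hR : ∀ ⦃a b⦄, R a b → R (σ b) (σ a))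
    (hT : IsCoherent R σ O T) {l : α} (hl : ¬ReflTransGen R l (σ l)) (hσl : σ l ∉ T) :
    IsCoherent R σ O (T ∪ {m | ReflTransGen R l m}) := by
  have mirror {y : α} (h : ReflTransGen R l (σ y)) : ReflTransGen R y (σ l) := by
    simpa only [hσ y] using reflTransGen_mirror hR h
  refine ⟨?_, ?_⟩
  · rintro a b hab (ha | ha)
    · exact Or.inl (hT.1 hab ha)
    · exact Or.inr (ha.tail hab)
  · rintro y hyO ⟨hy | hy, hσy | hσy⟩
    · exact hT.2 y hyO ⟨hy, hσy⟩
    · exact hσl (hT.mem_of_reflTransGen (mirror hσy) hy)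
    · exact hσl (hT.mem_of_reflTransGen (reflTransGen_mirror hR hy) hσy)
    · exact hl (hy.trans (mirror hσy))

/-- 2-SAT: `T` is the set of literals made true by a satisfying assignment. -/
theorem exists_closed_selection (hσ : Involutive σ) (hR : ∀ ⦃a b⦄, R a b → R (σ b) (σ a))
    (hO : ∀ a ∈ O, ¬(ReflTransGen R a (σ a) ∧ ReflTransGen R (σ a) a)) :
    ∃ T : Set α, (∀ ⦃a b⦄, R a b → a ∈ T → b ∈ T) ∧ ∀ a ∈ O, (a ∈ T ↔ σ a ∉ T) := by
  obtain ⟨T, hT, hmax⟩ := zorn_subset {T | IsCoherent R σ O T} fun c hc hchain =>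
    ⟨⋃₀ c, isCoherent_sUnion hc hchain, fun _ => Set.subset_sUnion_of_mem⟩
  have grow (l : α) (hl : ¬ReflTransGen R l (σ l)) (hσl : σ l ∉ T) : l ∈ T :=
    hmax (hT.union_reachable hσ hR hl hσl) Set.subset_union_left (Or.inr .refl)
  refine ⟨T, hT.1, fun a ha => ⟨fun haT hσa => hT.2 a ha ⟨haT, hσa⟩, fun hσa => ?_⟩⟩
  by_contra haT
  rcases not_and_or.1 (hO a ha) with h | h
  · exact haT (grow a h hσa)
  · exact hσa (grow (σ a) (by rwa [hσ a]) (by rwa [hσ a]))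

end Selection

lemma ediv_two_add_ite_le {a b c : ℤ} {p q : Prop} [Decidable p] [Decidable q]
    (hab : a ≤ b + 2 * c) (hpq : a = b + 2 * c → Odd a → p → q) :
    (a + if p then 1 else 0) / 2 ≤ (b + if q then 1 else 0) / 2 + c := by
  rw [Int.odd_iff] at hpq
  by_cases hp : p <;> by_cases hq : q <;>
    simp only [hp, hq, imp_iff_not_or, if_true, if_false, not_true_eq_false, or_false]
      at hpq ⊢ <;> omega

lemma neg_add_ite_ediv_two {a : ℤ} {p q : Prop} [Decidable p] [Decidable q]
    (hpq : Odd a → (p ↔ ¬q)) :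
    (-a + if q then 1 else 0) / 2 = -((a + if p then 1 else 0) / 2) := by
  rw [Int.odd_iff] at hpq
  by_cases hp : p <;> by_cases hq : q <;>
    simp only [hp, hq, if_true, if_false, not_true, not_false_eq_true, iff_true, iff_false,
      imp_iff_not_or, or_false, or_true] at hpq ⊢ <;> omega

variable {V : Type*}

def signed {β : Type*} [Neg β] (μ : V → β) : V ⊕ V → β := Sum.elim μ fun x => -μ x

@[simp] lemma signed_inl {β : Type*} [Neg β] (μ : V → β) (x : V) :
    signed μ (Sum.inl x) = μ x := rfl

@[simp] lemma signed_inr {β : Type*} [Neg β] (μ : V → β) (x : V) :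
    signed μ (Sum.inr x) = -μ x := rfl

@[simp] lemma signed_swap {β : Type*} [InvolutiveNeg β] (μ : V → β) (l : V ⊕ V) :
    signed μ l.swap = -signed μ l := by
  cases l <;> simp

variable {E : V ⊕ V → V ⊕ V → ℤ → Prop}

def IsPotential (E : V ⊕ V → V ⊕ V → ℤ → Prop) (F : V ⊕ V → ℤ) : Prop :=
  ∀ ⦃u v c⦄, E u v c → F u ≤ F v + c

def SwapSymmetric (E : V ⊕ V → V ⊕ V → ℤ → Prop) : Prop :=
  ∀ ⦃u v c⦄, E u v c → E v.swap u.swap c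

theorem isPotential_ceil {K : Type*} [Ring K] [LinearOrder K] [IsOrderedRing K] [FloorRing K]
    {g : V ⊕ V → K} (hg : ∀ ⦃u v c⦄, E u v c → g u ≤ g v + c) :
    IsPotential E fun l => ⌈g l⌉ := fun _ _ _ he =>
  (Int.ceil_le_ceil (hg he)).trans_eq (Int.ceil_add_intCast _ _)

/-- An edge of weight `c` that is tight for a potential `F` of the doubled weights `2 c`. -/
def IsTight (E : V ⊕ V → V ⊕ V → ℤ → Prop) (F : V ⊕ V → ℤ) (u v : V ⊕ V) : Prop :=
  ∃ c, E u v c ∧ F u = F v + 2 * c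

def HasOddZeroCycle (E : V ⊕ V → V ⊕ V → ℤ → Prop) : Prop :=
  ∃ (x : V) (n₁ n₂ : ℕ) (q₁ : Fin (n₁ + 1) → V ⊕ V) (w₁ : Fin n₁ → ℤ)
     (q₂ : Fin (n₂ + 1) → V ⊕ V) (w₂ : Fin n₂ → ℤ),
    IsEPath E n₁ q₁ w₁ ∧ IsEPath E n₂ q₂ w₂ ∧
    q₁ 0 = Sum.inr x ∧ q₁ (Fin.last n₁) = Sum.inl x ∧
    q₂ 0 = Sum.inl x ∧ q₂ (Fin.last n₂) = Sum.inr x ∧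
    (∑ i, w₁ i) + (∑ i, w₂ i) = 0 ∧ Odd (∑ i, w₁ i)

lemma _root_.IsEPath.cons {n : ℕ} {q : Fin (n + 1) → V ⊕ V} {w : Fin n → ℤ} {u : V ⊕ V} {c : ℤ}
    (he : E u (q 0) c) (h : IsEPath E n q w) :
    IsEPath E (n + 1) (Fin.cons u q) (Fin.cons c w) := by
  intro i
  refine Fin.cases ?_ (fun j => ?_) i
  · simpa using he
  · simpa [← Fin.succ_castSucc] using h j

lemma _root_.IsEPath.le_add_sum {F : V ⊕ V → ℤ} (hF : IsPotential E F) :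
    ∀ {n : ℕ} {q : Fin (n + 1) → V ⊕ V} {w : Fin n → ℤ}, IsEPath E n q w →
      F (q 0) ≤ F (q (Fin.last n)) + ∑ i, w i
  | 0, _, _, _ => by simp
  | n + 1, q, w, h => by
    have htail : F (q (Fin.succ 0)) ≤ F (q (Fin.last (n + 1))) + ∑ i : Fin n, w i.succ := by
      simpa [Fin.succ_last] using
        le_add_sum hF (q := fun i => q i.succ) (w := fun i => w i.succ)
          fun i => by simpa [← Fin.succ_castSucc] using h i.succ
    have hhead := hF (h 0)
    simp only [Fin.castSucc_zero] at hhead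
    rw [Fin.sum_univ_succ]
    omega

lemma exists_isEPath_of_reflTransGen {F : V ⊕ V → ℤ} {u v : V ⊕ V}
    (h : ReflTransGen (IsTight E F) u v) :
    ∃ (n : ℕ) (q : Fin (n + 1) → V ⊕ V) (w : Fin n → ℤ),
      IsEPath E n q w ∧ q 0 = u ∧ q (Fin.last n) = v ∧ F u = F v + 2 * ∑ i, w i := by
  induction h using ReflTransGen.head_induction_on with
  | refl => exact ⟨0, fun _ => v, Fin.elim0, fun i => i.elim0, rfl, rfl, by simp⟩
  | @head a b hab _ ih =>
    obtain ⟨c, he, hc⟩ := hab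
    obtain ⟨n, q, w, hq, hq0, hqn, hw⟩ := ih
    refine ⟨n + 1, Fin.cons a q, Fin.cons c w, hq.cons (hq0 ▸ he), rfl, ?_, ?_⟩
    · rw [Fin.cons_last, hqn]
    · rw [Fin.sum_cons]
      omega

theorem not_hasOddZeroCycle {μ : V → ℤ} (hμ : IsPotential E (signed μ)) :
    ¬HasOddZeroCycle E := by
  rintro ⟨x, n₁, n₂, q₁, w₁, q₂, w₂, hp₁, hp₂, h₁0, h₁n, h₂0, h₂n, hzero, k, hk⟩
  have b₁ := hp₁.le_add_sum hμ
  have b₂ := hp₂.le_add_sum hμ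
  rw [h₁0, h₁n, signed_inr, signed_inl] at b₁
  rw [h₂0, h₂n, signed_inl, signed_inr] at b₂
  omega

lemma hasOddZeroCycle_of_reflTransGen {d : V → ℤ} {x : V} (hodd : Odd (d x))
    (h₁ : ReflTransGen (IsTight E (signed d)) (Sum.inr x) (Sum.inl x))
    (h₂ : ReflTransGen (IsTight E (signed d)) (Sum.inl x) (Sum.inr x)) :
    HasOddZeroCycle E := by
  obtain ⟨n₁, q₁, w₁, hp₁, h₁0, h₁n, hw₁⟩ := exists_isEPath_of_reflTransGen h₁
  obtain ⟨n₂, q₂, w₂, hp₂, h₂0, h₂n, hw₂⟩ := exists_isEPath_of_reflTransGen h₂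
  obtain ⟨k, hk⟩ := hodd
  simp only [signed_inl, signed_inr] at hw₁ hw₂
  exact ⟨x, n₁, n₂, q₁, w₁, q₂, w₂, hp₁, hp₂, h₁0, h₁n, h₂0, h₂n, by omega, -k - 1, by omega⟩

lemma isTight_mirror (hE : SwapSymmetric E) {F : V ⊕ V → ℤ} (hF : ∀ l, F l.swap = -F l)
    ⦃u v : V ⊕ V⦄ (h : IsTight E F u v) : IsTight E F v.swap u.swap := by
  obtain ⟨c, he, hc⟩ := h
  exact ⟨c, hE he, by rw [hF, hF]; omega⟩

lemma IsPotential.signed_sub (hE : SwapSymmetric E) {f : V ⊕ V → ℤ} (hf : IsPotential E f)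
    ⦃u v : V ⊕ V⦄ ⦃c : ℤ⦄ (he : E u v c) :
    signed (fun x => f (.inl x) - f (.inr x)) u
      ≤ signed (fun x => f (.inl x) - f (.inr x)) v + 2 * c := by
  have h₁ := hf he
  have h₂ := hf (hE he)
  cases u <;> cases v <;>
    simp only [signed_inl, signed_inr, Sum.swap_inl, Sum.swap_inr] at * <;> omega

theorem exists_isPotential_or_hasOddZeroCycle (hE : SwapSymmetric E) {d : V → ℤ}
    (hd : ∀ ⦃u v c⦄, E u v c → signed d u ≤ signed d v + 2 * c) :
    (∃ μ : V → ℤ, IsPotential E (signed μ)) ∨ HasOddZeroCycle E := by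
  classical
  refine or_iff_not_imp_right.2 fun hcyc => ?_
  have hO : ∀ l ∈ {l | Odd (signed d l)},
      ¬(ReflTransGen (IsTight E (signed d)) l l.swap ∧
        ReflTransGen (IsTight E (signed d)) l.swap l) := by
    rintro (x | x) hodd ⟨h, h'⟩
    · exact hcyc (hasOddZeroCycle_of_reflTransGen hodd h' h)
    · exact hcyc (hasOddZeroCycle_of_reflTransGen (by simpa using hodd) h h')
  obtain ⟨T, hclosed, hsel⟩ := exists_closed_selection Sum.swap_swap
    (isTight_mirror hE (signed_swap d)) hO
  -- `/ 2` rounds down, so `ρ l` is `signed d l / 2` rounded up exactly when `l ∈ T`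
  set ρ : V ⊕ V → ℤ := fun l => (signed d l + if l ∈ T then 1 else 0) / 2
  have hρ : signed (fun x => ρ (.inl x)) = ρ := by
    funext l
    rcases l with x | x
    · rfl
    · exact (neg_add_ite_ediv_two (hsel (.inl x))).symm
  refine ⟨fun x => ρ (.inl x), fun u v c he => ?_⟩
  rw [hρ]
  exact ediv_two_add_ite_le (hd he) fun htight _ hu => hclosed ⟨c, he, htight⟩ hu

variable {P S N : Finset (V × V × ℤ)} {U Lo : Finset (V × ℤ)}

lemma swapSymmetric_utvpiEdge : SwapSymmetric (UTVPIEdge P S N U Lo) := by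
  intro u v c h
  unfold UTVPIEdge
  rcases h with ⟨p, hp, rfl, rfl, rfl⟩ | ⟨p, hp, rfl, rfl, rfl⟩ | ⟨p, hp, rfl, rfl, rfl⟩ |
    ⟨p, hp, rfl, rfl, rfl⟩ | ⟨p, hp, rfl, rfl, rfl⟩ | ⟨p, hp, rfl, rfl, rfl⟩ |
    ⟨p, hp, rfl, rfl, rfl⟩ | ⟨p, hp, rfl, rfl, rfl⟩ <;> aesop

lemma utvpiSatZ_iff {μ : V → ℤ} :
    UTVPISatZ P S N U Lo μ ↔ IsPotential (UTVPIEdge P S N U Lo) (signed μ) := by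
  constructor
  · rintro ⟨hP, hS, hN, hU, hLo⟩ u v c (⟨p, hp, rfl, rfl, rfl⟩ | ⟨p, hp, rfl, rfl, rfl⟩ |
      ⟨p, hp, rfl, rfl, rfl⟩ | ⟨p, hp, rfl, rfl, rfl⟩ | ⟨p, hp, rfl, rfl, rfl⟩ |
      ⟨p, hp, rfl, rfl, rfl⟩ | ⟨p, hp, rfl, rfl, rfl⟩ | ⟨p, hp, rfl, rfl, rfl⟩) <;>
    simp only [signed_inl, signed_inr] <;>
    first
    | linarith [hP p hp] | linarith [hS p hp] | linarith [hN p hp] | linarith [hU p hp]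
    | linarith [hLo p hp]
  · intro h
    refine ⟨fun p hp => ?_, fun p hp => ?_, fun p hp => ?_, fun p hp => ?_, fun p hp => ?_⟩
    · have := @h (.inl p.1) (.inl p.2.1) p.2.2 (by unfold UTVPIEdge; aesop)
      simp only [signed_inl] at this; omega
    · have := @h (.inr p.1) (.inl p.2.1) p.2.2 (by unfold UTVPIEdge; aesop)
      simp only [signed_inl, signed_inr] at this; omega
    · have := @h (.inl p.1) (.inr p.2.1) p.2.2 (by unfold UTVPIEdge; aesop)
      simp only [signed_inl, signed_inr] at this; omega
    · have := @h (.inr p.1) (.inl p.1) (2 * p.2) (by unfold UTVPIEdge; aesop)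
      simp only [signed_inl, signed_inr] at this; omega
    · have := @h (.inl p.1) (.inr p.1) (2 * p.2) (by unfold UTVPIEdge; aesop)
      simp only [signed_inl, signed_inr] at this; omega

lemma _root_.UTVPISatQ.signed_le {μ : V → ℚ} (hμ : UTVPISatQ P S N U Lo μ) ⦃u v : V ⊕ V⦄
    ⦃c : ℤ⦄ (he : UTVPIEdge P S N U Lo u v c) : signed μ u ≤ signed μ v + c := by
  obtain ⟨hP, hS, hN, hU, hLo⟩ := hμ
  rcases he with ⟨p, hp, rfl, rfl, rfl⟩ | ⟨p, hp, rfl, rfl, rfl⟩ | ⟨p, hp, rfl, rfl, rfl⟩ |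
    ⟨p, hp, rfl, rfl, rfl⟩ | ⟨p, hp, rfl, rfl, rfl⟩ | ⟨p, hp, rfl, rfl, rfl⟩ |
    ⟨p, hp, rfl, rfl, rfl⟩ | ⟨p, hp, rfl, rfl, rfl⟩ <;>
  simp only [signed_inl, signed_inr, Int.cast_mul, Int.cast_ofNat] <;>
  first
  | linarith [hP p hp] | linarith [hS p hp] | linarith [hN p hp] | linarith [hU p hp]
  | linarith [hLo p hp]

end UTVPI

open UTVPI

/-- Lahiri–Musuvathi: a ℚ-satisfiable conjunction φ of UTVPI constraints is
ℤ-unsatisfiable iff the encoded graph G(φ) has a zero-weight cycle through some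
x⁺ and x⁻ such that the path from x⁻ to x⁺ along the cycle has odd weight. -/
theorem stmt_12 {V : Type*} (P S N : Finset (V × V × ℤ)) (U Lo : Finset (V × ℤ))
    (hQ : ∃ μ : V → ℚ, UTVPISatQ P S N U Lo μ) :
    (¬ ∃ μ : V → ℤ, UTVPISatZ P S N U Lo μ) ↔
    (∃ (x : V) (n₁ n₂ : ℕ) (q₁ : Fin (n₁ + 1) → V ⊕ V) (w₁ : Fin n₁ → ℤ)
       (q₂ : Fin (n₂ + 1) → V ⊕ V) (w₂ : Fin n₂ → ℤ),
      IsEPath (UTVPIEdge P S N U Lo) n₁ q₁ w₁ ∧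
      IsEPath (UTVPIEdge P S N U Lo) n₂ q₂ w₂ ∧
      q₁ 0 = Sum.inr x ∧ q₁ (Fin.last n₁) = Sum.inl x ∧
      q₂ 0 = Sum.inl x ∧ q₂ (Fin.last n₂) = Sum.inr x ∧
      (∑ i, w₁ i) + (∑ i, w₂ i) = 0 ∧ Odd (∑ i, w₁ i)) := by
  obtain ⟨μ, hμ⟩ := hQ
  have hd := (isPotential_ceil hμ.signed_le).signed_sub swapSymmetric_utvpiEdge
  constructor
  · intro hZ
    refine (exists_isPotential_or_hasOddZeroCycle swapSymmetric_utvpiEdge hd).resolve_left ?_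
    rintro ⟨ν, hν⟩
    exact hZ ⟨ν, utvpiSatZ_iff.2 hν⟩
  · rintro hcyc ⟨ν, hν⟩
    exact not_hasOddZeroCycle (utvpiSatZ_iff.1 hν) hcyc
end

section
/- (Soundness of the 'if' direction of Theorem on UTVPI integer unsatisfiability) If the encoded difference graph of a set φ of integer UTVPI constraints contains a zero-weight cycle through x⁺ and x⁻ in which the path x⁻ ⤳ x⁺ has weight 2k+1 (hence the path x⁺ ⤳ x⁻ has weight -2k-1), then φ entails both 0 ≤ x + k and 0 ≤ -x - k - 1 over ℤ, and hence φ is unsatisfiable over ℤ. -/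
/-!
A model `μ` of the constraints induces the potential `Υ = signedVal μ` (`Υ(x⁺) = μ x`,
`Υ(x⁻) = -μ x`) on the encoded graph, and every edge `u → v` of weight `c` satisfies
`Υ u - Υ v ≤ c`; summing along a path bounds `Υ` at its start minus `Υ` at its end by the weight
of the path. The two paths then give `-2 μ x ≤ 2k + 1` and `2 μ x ≤ -2k - 1`; since `μ x` is an
integer, the odd bounds tighten to `-k ≤ μ x` and `μ x ≤ -k - 1`, which are incompatible.
-/

section

variable {V : Type*}

def signedVal (μ : V → ℤ) : V ⊕ V → ℤ :=
  Sum.elim μ (-μ)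

theorem UTVPIEdge.signedVal_sub_le {P S N : Finset (V × V × ℤ)} {U Lo : Finset (V × ℤ)}
    {μ : V → ℤ} (hμ : UTVPISatZ P S N U Lo μ) {u v : V ⊕ V} {c : ℤ}
    (he : UTVPIEdge P S N U Lo u v c) : signedVal μ u - signedVal μ v ≤ c := by
  obtain ⟨hP, hS, hN, hU, hLo⟩ := hμ
  rcases he with ⟨p, hp, rfl, rfl, rfl⟩ | ⟨p, hp, rfl, rfl, rfl⟩ | ⟨p, hp, rfl, rfl, rfl⟩ |
    ⟨p, hp, rfl, rfl, rfl⟩ | ⟨p, hp, rfl, rfl, rfl⟩ | ⟨p, hp, rfl, rfl, rfl⟩ |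
    ⟨p, hp, rfl, rfl, rfl⟩ | ⟨p, hp, rfl, rfl, rfl⟩ <;>
  simp only [signedVal, Sum.elim_inl, Sum.elim_inr, Pi.neg_apply]
  · linarith [hP p hp]
  · linarith [hP p hp]
  · linarith [hS p hp]
  · linarith [hS p hp]
  · linarith [hN p hp]
  · linarith [hN p hp]
  · linarith [hU p hp]
  · linarith [hLo p hp]

theorem IsEPath.init {E : V ⊕ V → V ⊕ V → ℤ → Prop} {n : ℕ} {q : Fin (n + 2) → V ⊕ V}
    {w : Fin (n + 1) → ℤ} (hp : IsEPath E (n + 1) q w) :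
    IsEPath E n (fun i => q i.castSucc) (fun i => w i.castSucc) := fun i => by
  simpa only [Fin.succ_castSucc] using hp i.castSucc

theorem IsEPath.sub_le_sum {E : V ⊕ V → V ⊕ V → ℤ → Prop} {f : V ⊕ V → ℤ}
    (hE : ∀ u v c, E u v c → f u - f v ≤ c) {n : ℕ} {q : Fin (n + 1) → V ⊕ V} {w : Fin n → ℤ}
    (hp : IsEPath E n q w) : f (q 0) - f (q (Fin.last n)) ≤ ∑ i, w i := by
  induction n with
  | zero => simp [Fin.last]
  | succ n ih =>
    have hinit := ih hp.init
    have hlast := hE _ _ _ (hp (Fin.last n))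
    rw [Fin.sum_univ_castSucc]
    simp only [Fin.castSucc_zero, Fin.succ_last] at hinit hlast
    linarith

end

/-- Soundness of the 'if' direction: if the encoded graph of φ has a zero-weight
cycle through x⁺ and x⁻ in which the path x⁻ ⤳ x⁺ has weight 2k+1 (so the path
x⁺ ⤳ x⁻ has weight -2k-1), then φ entails 0 ≤ x + k and 0 ≤ -x - k - 1 over ℤ,
hence φ is ℤ-unsatisfiable. -/
theorem stmt_13 {V : Type*} (P S N : Finset (V × V × ℤ)) (U Lo : Finset (V × ℤ))
    (x : V) (k : ℤ) (n₁ n₂ : ℕ)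
    (q₁ : Fin (n₁ + 1) → V ⊕ V) (w₁ : Fin n₁ → ℤ)
    (q₂ : Fin (n₂ + 1) → V ⊕ V) (w₂ : Fin n₂ → ℤ)
    (hp₁ : IsEPath (UTVPIEdge P S N U Lo) n₁ q₁ w₁)
    (hp₂ : IsEPath (UTVPIEdge P S N U Lo) n₂ q₂ w₂)
    (hs₁ : q₁ 0 = Sum.inr x) (he₁ : q₁ (Fin.last n₁) = Sum.inl x)
    (hs₂ : q₂ 0 = Sum.inl x) (he₂ : q₂ (Fin.last n₂) = Sum.inr x)
    (hw₁ : (∑ i, w₁ i) = 2 * k + 1)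
    (hzero : (∑ i, w₁ i) + (∑ i, w₂ i) = 0) :
    (∀ μ : V → ℤ, UTVPISatZ P S N U Lo μ → 0 ≤ μ x + k) ∧
    (∀ μ : V → ℤ, UTVPISatZ P S N U Lo μ → 0 ≤ -μ x - k - 1) ∧
    ¬ ∃ μ : V → ℤ, UTVPISatZ P S N U Lo μ := by
  have bounds (μ : V → ℤ) (hμ : UTVPISatZ P S N U Lo μ) :
      -2 * μ x ≤ 2 * k + 1 ∧ 2 * μ x ≤ -(2 * k + 1) := by
    have h₁ := hp₁.sub_le_sum fun _ _ _ he => he.signedVal_sub_le hμ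
    have h₂ := hp₂.sub_le_sum fun _ _ _ he => he.signedVal_sub_le hμ
    rw [hs₁, he₁] at h₁
    rw [hs₂, he₂] at h₂
    simp only [signedVal, Sum.elim_inl, Sum.elim_inr, Pi.neg_apply] at h₁ h₂
    constructor <;> linarith
  have lower (μ : V → ℤ) (hμ : UTVPISatZ P S N U Lo μ) : 0 ≤ μ x + k := by
    have := (bounds μ hμ).1
    omega
  have upper (μ : V → ℤ) (hμ : UTVPISatZ P S N U Lo μ) : 0 ≤ -μ x - k - 1 := by
    have := (bounds μ hμ).2
    omega
  exact ⟨lower, upper, fun ⟨μ, hμ⟩ => by linarith [lower μ hμ, upper μ hμ]⟩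
end

section
/- A theory T is convex when for all sets of T-literals L and variable equalities e₁,...,eₙ, L ⊨_T e₁ ∨ ... ∨ eₙ implies L ⊨_T eᵢ for some i. The theory of linear rational arithmetic (conjunctions of weak linear inequalities over ℚ) is convex: if a satisfiable set L of weak linear inequalities entails a disjunction of equalities between variables, it entails one of the disjuncts. -/
/-! The solution set of a system of weak affine inequalities is convex, and each equality
`μ k = μ l` cuts out a hyperplane. A nonempty convex set covered by finitely many hyperplanes
lies in one of them, since a line not contained in a hyperplane meets it at most once. -/

open AffineMap Set

lemma setOf_lineMap_eq_zero_subsingleton {𝕜 : Type*} [Field 𝕜] {u v : 𝕜} (h : u ≠ 0 ∨ v ≠ 0) :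
    {t : 𝕜 | lineMap u v t = 0}.Subsingleton := by
  by_cases huv : u = v
  · subst huv
    have hu : u ≠ 0 := h.elim id id
    simp [hu]
  · exact subsingleton_singleton.preimage (lineMap_injective 𝕜 huv)

section

variable {𝕜 E : Type*} [Field 𝕜] [LinearOrder 𝕜] [IsStrictOrderedRing 𝕜]
  [AddCommGroup E] [Module 𝕜 E]

/- Induction on `S`: a point of the segment from `x` (off the old hyperplanes) to `y` (off the
new one) avoids all of them, since each hyperplane meets the line through `x` and `y` at most
once. -/
lemma Convex.exists_forall_apply_ne_zero {s : Set E} (hs : Convex 𝕜 s) (hne : s.Nonempty)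
    {ι : Type*} (f : ι → E →ᵃ[𝕜] 𝕜) (S : Finset ι) (h : ∀ i ∈ S, ∃ x ∈ s, f i x ≠ 0) :
    ∃ x ∈ s, ∀ i ∈ S, f i x ≠ 0 := by
  classical
  induction S using Finset.induction_on with
  | empty => exact hne.imp fun _ hx ↦ ⟨hx, by simp⟩
  | insert i S _ ih =>
    obtain ⟨x, hx, hxS⟩ := ih fun j hj ↦ h j (Finset.mem_insert_of_mem hj)
    obtain ⟨y, hy, hyi⟩ := h i (Finset.mem_insert_self i S)
    have hbad : (⋃ j ∈ insert i S, {t : 𝕜 | lineMap (f j x) (f j y) t = 0}).Finite := by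
      refine (Finset.finite_toSet _).biUnion fun j hj ↦
        (setOf_lineMap_eq_zero_subsingleton ?_).finite
      rcases Finset.mem_insert.mp hj with rfl | hj
      exacts [Or.inr hyi, Or.inl (hxS j hj)]
    obtain ⟨t, ht, htbad⟩ := ((Icc_infinite (zero_lt_one' 𝕜)).sdiff hbad).nonempty
    refine ⟨lineMap x y t, hs.lineMap_mem hx hy ht, fun j hj hzero ↦ htbad ?_⟩
    exact mem_biUnion hj (by simpa using hzero)

lemma Convex.exists_subset_preimage_zero_of_subset_iUnion {s : Set E} (hs : Convex 𝕜 s)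
    (hne : s.Nonempty) {ι : Type*} [Finite ι] (f : ι → E →ᵃ[𝕜] 𝕜)
    (hcover : s ⊆ ⋃ i, f i ⁻¹' {0}) : ∃ i, s ⊆ f i ⁻¹' {0} := by
  have := Fintype.ofFinite ι
  by_contra! hnot
  obtain ⟨x, hx, hxf⟩ := hs.exists_forall_apply_ne_zero hne f Finset.univ fun i _ ↦ by
    simpa [not_subset] using hnot i
  obtain ⟨i, hi⟩ := mem_iUnion.mp (hcover hx)
  exact hxf i (Finset.mem_univ i) hi

end

/-- Convexity of linear rational arithmetic: if a satisfiable finite set L of weak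
affine inequalities 0 ≤ Σⱼ aᵢⱼ xⱼ + bᵢ entails a disjunction of equalities between
variables, then it entails one of the disjuncts. -/
theorem stmt_14 (p m n : ℕ) (a : Fin p → Fin m → ℚ) (b : Fin p → ℚ)
    (e : Fin n → Fin m × Fin m)
    (hsat : ∃ μ : Fin m → ℚ, ∀ i, 0 ≤ (∑ j, a i j * μ j) + b i)
    (hent : ∀ μ : Fin m → ℚ, (∀ i, 0 ≤ (∑ j, a i j * μ j) + b i) →
      ∃ i, μ (e i).1 = μ (e i).2) :
    ∃ i, ∀ μ : Fin m → ℚ, (∀ i', 0 ≤ (∑ j, a i' j * μ j) + b i') →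
      μ (e i).1 = μ (e i).2 := by
  let F : (Fin m → ℚ) →ᵃ[ℚ] Fin p → ℚ := (Matrix.mulVecLin a).toAffineMap + AffineMap.const ℚ _ b
  let g (i : Fin n) : (Fin m → ℚ) →ᵃ[ℚ] ℚ :=
    (LinearMap.proj (R := ℚ) (φ := fun _ ↦ ℚ) (e i).1 - LinearMap.proj (e i).2).toAffineMap
  have hF : F ⁻¹' Ici 0 = {μ | ∀ i, 0 ≤ (∑ j, a i j * μ j) + b i} := by
    ext μ; exact Pi.le_def
  have hg (i : Fin n) (μ : Fin m → ℚ) : μ ∈ g i ⁻¹' {0} ↔ μ (e i).1 = μ (e i).2 := by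
    simp [g, sub_eq_zero]
  have hconv := (convex_Ici (0 : Fin p → ℚ)).affine_preimage F
  rw [hF] at hconv
  obtain ⟨i, hi⟩ := hconv.exists_subset_preimage_zero_of_subset_iUnion hsat g fun μ hμ ↦ by
    simpa [hg] using hent μ hμ
  exact ⟨i, fun μ hμ ↦ (hg i μ).mp (hi hμ)⟩
end

section
/- Suppose A ⊨ I_ε and I_ε ∧ B ⊨ ⊥ hold over ℚ for all sufficiently small ε > 0, where I_ε = (0 ≤ t - c·ε) with c > 0 and t an affine term not involving ε, and where A, B do not mention ε. Then I = (0 < t) satisfies A ⊨ I and I ∧ B ⊨ ⊥. -/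
theorem exists_pos_sub_mul_nonneg_iff {K : Type*} [Field K] [LinearOrder K]
    [IsStrictOrderedRing K] {c : K} (hc : 0 < c) {t : K} :
    (∃ δ : K, 0 < δ ∧ 0 ≤ t - c * δ) ↔ 0 < t := by
  constructor
  · rintro ⟨δ, hδ, h⟩
    exact (mul_pos hc hδ).trans_le (sub_nonneg.1 h)
  · intro ht
    refine ⟨t / c, div_pos ht hc, ?_⟩
    rw [mul_div_cancel₀ t hc.ne', sub_self]

/-- From an ε-parametric interpolant I_ε = (0 ≤ t - cε), c > 0, with A ⊨ I_ε for
some small ε > 0 (per model) and I_ε ∧ B unsatisfiable for every ε > 0, the formula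
I = (0 < t) satisfies A ⊨ I and I ∧ B ⊨ ⊥. -/
theorem stmt_15 {V : Type*} (A B : (V → ℚ) → Prop) (t : (V → ℚ) → ℚ) (c : ℚ)
    (hc : 0 < c)
    (hA : ∀ μ, A μ → ∃ δ : ℚ, 0 < δ ∧ 0 ≤ t μ - c * δ)
    (hB : ∀ δ : ℚ, 0 < δ → ∀ μ, ¬ (B μ ∧ 0 ≤ t μ - c * δ)) :
    (∀ μ, A μ → 0 < t μ) ∧ (∀ μ, ¬ (0 < t μ ∧ B μ)) := by
  refine ⟨fun μ hμ => (exists_pos_sub_mul_nonneg_iff hc).1 (hA μ hμ), ?_⟩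
  rintro μ ⟨ht, hBμ⟩
  obtain ⟨δ, hδ, hδt⟩ := (exists_pos_sub_mul_nonneg_iff hc).2 ht
  exact hB δ hδ μ ⟨hBμ, hδt⟩
end
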